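/- Let R = k[X,Y,Z]/(XZ, YZ) over k = ℤ/(p) with p prime. Then for every e ∈ ℕ, dim_k R/(X^{p^e}, Y^{p^e}, Z^{p^e}) = p^{2e} + p^e - 1. -/

import Mathlib

/-!
Modulo `(X^q, Y^q, Z^q)` the ring `R` becomes `k[X,Y,Z]` modulo the monomial ideal
`(XZ, YZ, X^q, Y^q, Z^q)`. The quotient of a polynomial ring by a monomial ideal is free on the
monomials outside the ideal: as a `k`-submodule the ideal consists of the polynomials supported
on the upper closure of the exponents of its generators, so it is the kernel of reading off the
remaining coefficients. Here these standard monomials are `X^a Y^b` with `a, b < q` and `Z^c` with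
`0 < c < q`, which gives `q^2 + q - 1` of them.
-/

open MvPolynomial

noncomputable section

/-- The defining ideal of `R = k[X,Y,Z]/(XZ, YZ)`. -/
def rel1 (p : ℕ) : Ideal (MvPolynomial (Fin 3) (ZMod p)) :=
  Ideal.span {X 0 * X 2, X 1 * X 2}

namespace Finsupp

variable {α M R : Type*} [Semiring R] [AddCommMonoid M] [Module R M]

theorem ker_lsubtypeDomain_compl (s : Set α) :
    LinearMap.ker (lsubtypeDomain (M := M) (R := R) sᶜ) = supported M R s := by
  ext f
  simp [lsubtypeDomain_apply, subtypeDomain_eq_zero_iff', mem_supported']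

theorem lsubtypeDomain_surjective (s : Set α) :
    Function.Surjective (lsubtypeDomain (M := M) (R := R) s) := by
  classical
  exact fun f => ⟨f.extendDomain, subtypeDomain_extendDomain f⟩

end Finsupp

namespace MvPolynomial

variable {σ R : Type*} [CommRing R]

def monomialIdeal (S : Set (σ →₀ ℕ)) : Ideal (MvPolynomial σ R) :=
  Ideal.span ((fun s => monomial s (1 : R)) '' S)

theorem restrictScalars_monomialIdeal (S : Set (σ →₀ ℕ)) :
    (monomialIdeal S).restrictScalars R = restrictSupport R (upperClosure S) := by
  ext x
  simp [monomialIdeal, mem_ideal_span_monomial_image, mem_restrictSupport_iff, Set.subset_def]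

def quotientMonomialIdealEquiv (S : Set (σ →₀ ℕ)) :
    (MvPolynomial σ R ⧸ monomialIdeal S) ≃ₗ[R] ↥((upperClosure S : Set (σ →₀ ℕ))ᶜ) →₀ R :=
  let standardCoeffs : MvPolynomial σ R →ₗ[R] ↥((upperClosure S : Set (σ →₀ ℕ))ᶜ) →₀ R :=
    Finsupp.lsubtypeDomain _ ∘ₗ (AddMonoidAlgebra.coeffLinearEquiv R).toLinearMap
  have hker : LinearMap.ker standardCoeffs = (monomialIdeal S).restrictScalars R := by
    rw [LinearMap.ker_comp, Finsupp.ker_lsubtypeDomain_compl, restrictScalars_monomialIdeal]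
    rfl
  have hsurj : Function.Surjective standardCoeffs :=
    (Finsupp.lsubtypeDomain_surjective (M := R) (R := R) _).comp
      (AddMonoidAlgebra.coeffLinearEquiv R).surjective
  (Submodule.Quotient.restrictScalarsEquiv R (monomialIdeal S)).symm ≪≫ₗ
    Submodule.quotEquivOfEq _ _ hker.symm ≪≫ₗ standardCoeffs.quotKerEquivOfSurjective hsurj

theorem finrank_quotient_monomialIdeal [Nontrivial R] (S : Set (σ →₀ ℕ)) :
    Module.finrank R (MvPolynomial σ R ⧸ monomialIdeal S) =
      Nat.card ↥((upperClosure S : Set (σ →₀ ℕ))ᶜ) :=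
  (quotientMonomialIdealEquiv S).finrank_eq.trans
    (Module.finrank_eq_nat_card_basis (Finsupp.basisSingleOne))

end MvPolynomial

open Finsupp in
def rel1PowExponents (q : ℕ) : Set (Fin 3 →₀ ℕ) :=
  {single 0 1 + single 2 1, single 1 1 + single 2 1, single 0 q, single 1 q, single 2 q}

theorem rel1_sup_span_X_pow (p q : ℕ) :
    rel1 p ⊔ Ideal.span {X 0 ^ q, X 1 ^ q, X 2 ^ q} = monomialIdeal (rel1PowExponents q) := by
  simp only [rel1, monomialIdeal, rel1PowExponents, ← Ideal.span_union, Set.image_insert_eq,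
    Set.image_singleton, X_pow_eq_monomial]
  simp only [X, monomial_mul, mul_one, Set.insert_union, Set.singleton_union]

theorem mem_compl_upperClosure_rel1PowExponents {q : ℕ} {m : Fin 3 →₀ ℕ} :
    m ∈ ((upperClosure (rel1PowExponents q) : Set (Fin 3 →₀ ℕ))ᶜ) ↔
      m 0 < q ∧ m 1 < q ∧ m 2 < q ∧ (m 2 = 0 ∨ m 0 = 0 ∧ m 1 = 0) := by
  simp [rel1PowExponents, Finsupp.le_def, Fin.forall_fin_succ]
  omega

def standardExponents (q : ℕ) : Finset (Fin 3 → ℕ) :=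
  ((Finset.range q ×ˢ Finset.range q).image fun ab => ![ab.1, ab.2, 0]) ∪
    (Finset.Ico 1 q).image fun c => ![0, 0, c]

theorem mem_standardExponents {q : ℕ} {f : Fin 3 → ℕ} :
    f ∈ standardExponents q ↔ f 0 < q ∧ f 1 < q ∧ f 2 < q ∧ (f 2 = 0 ∨ f 0 = 0 ∧ f 1 = 0) := by
  constructor
  · intro h
    simp only [standardExponents, Finset.mem_union, Finset.mem_image, Finset.mem_product,
      Finset.mem_range, Prod.exists, Finset.mem_Ico] at h
    rcases h with ⟨a, b, ⟨ha, hb⟩, rfl⟩ | ⟨c, hc, rfl⟩ <;> simp <;> omega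
  · rintro ⟨h0, h1, h2, hf⟩
    obtain hz | hz := eq_or_ne (f 2) 0
    · refine Finset.mem_union_left _ (Finset.mem_image.2 ⟨(f 0, f 1), by simp [h0, h1], ?_⟩)
      ext i; fin_cases i <;> simp [hz]
    · obtain ⟨hf0, hf1⟩ := hf.resolve_left hz
      refine Finset.mem_union_right _ (Finset.mem_image.2 ⟨f 2, by simp; omega, ?_⟩)
      ext i; fin_cases i <;> simp [hf0, hf1]

theorem card_standardExponents (q : ℕ) : (standardExponents q).card = q * q + (q - 1) := by
  rw [standardExponents, Finset.card_union_of_disjoint, Finset.card_image_of_injective,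
    Finset.card_image_of_injective]
  · simp
  · intro a b h
    simpa using congrFun h 2
  · rintro ⟨a, b⟩ ⟨a', b'⟩ h
    simpa using And.intro (congrFun h 0) (congrFun h 1)
  · simp only [Finset.disjoint_left, Finset.mem_image, Finset.mem_Ico]
    rintro _ ⟨_, -, rfl⟩ ⟨c, ⟨hc, -⟩, h⟩
    have : c = 0 := by simpa using congrFun h 2
    omega

theorem card_compl_upperClosure_rel1PowExponents (q : ℕ) :
    Nat.card ↥((upperClosure (rel1PowExponents q) : Set (Fin 3 →₀ ℕ))ᶜ) = q * q + (q - 1) := by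
  rw [← card_standardExponents, ← Nat.card_eq_finsetCard]
  exact Nat.card_congr (Finsupp.equivFunOnFinite.subtypeEquiv fun m => by
    rw [mem_compl_upperClosure_rel1PowExponents, mem_standardExponents]; rfl)

/-- For `R = k[X,Y,Z]/(XZ, YZ)` over `k = ℤ/(p)`, `p` prime, and every `e`,
`dim_k R/(X^{p^e}, Y^{p^e}, Z^{p^e}) = p^{2e} + p^e - 1`. -/
theorem stmt1 (p : ℕ) [Fact p.Prime] (e : ℕ) :
    Module.finrank (ZMod p)
        ((MvPolynomial (Fin 3) (ZMod p) ⧸ rel1 p) ⧸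
          Ideal.span {Ideal.Quotient.mk (rel1 p) (X 0) ^ p ^ e,
            Ideal.Quotient.mk (rel1 p) (X 1) ^ p ^ e,
            Ideal.Quotient.mk (rel1 p) (X 2) ^ p ^ e}) =
      p ^ (2 * e) + p ^ e - 1 := by
  have hmap : Ideal.span {Ideal.Quotient.mk (rel1 p) (X 0) ^ p ^ e,
      Ideal.Quotient.mk (rel1 p) (X 1) ^ p ^ e, Ideal.Quotient.mk (rel1 p) (X 2) ^ p ^ e} =
      (Ideal.span {X 0 ^ p ^ e, X 1 ^ p ^ e, X 2 ^ p ^ e}).map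
        (Ideal.Quotient.mkₐ (ZMod p) (rel1 p)) := by
    simp [Ideal.map_span, Set.image_insert_eq]
  rw [hmap, (DoubleQuot.quotQuotEquivQuotSupₐ (ZMod p) _ _).toLinearEquiv.finrank_eq,
    rel1_sup_span_X_pow, finrank_quotient_monomialIdeal,
    card_compl_upperClosure_rel1PowExponents, mul_comm 2, pow_mul, sq]
  have : 0 < p ^ e := pow_pos (Fact.out : p.Prime).pos e
  omega
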